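/- Decompose the curvature form of a connection ω on a Gaussian foliated spacetime as F_ω = e⁰ ∧ E_ω + B_ω into electric and magnetic parts, where E_ω = e₀ ⌟ F_ω. Then in an adapted frame the spatial covariant derivative of F_ω (as a section of Λ²M ⊗ Ad P) decomposes as (∇_ω F_ω)_k = e⁰ ∧ e^i ⊗ ((D_ω E_ω)_{ki} + II_k^ℓ B_{ℓi}) + e^i ∧ e^j ⊗ ½((D_ω B_ω)_{kij} − II_{kj} E_i + II_{ki} E_j), while the temporal derivative satisfies ∇_ω F_ω/dτ = e⁰ ∧ (∇_ω E_ω/dτ) + (∇_ω B_ω/dτ). -/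

import Mathlib

/-!
Every component of `∇_ω F_ω` is `nabAd` minus two contractions of `F_ω` with the frame
Christoffel symbols. In a Gaussian adapted frame a temporal derivative has no connection terms,
`Γ_{k0}^σ` only sees the spatial indices (through `−II`), and `Γ_{ki}^σ` contributes `−II_{ki}`
along `e₀` and `ΓD` along `Σ`. Antisymmetry of `F_ω` turns `F_{i0}` into `−E_i`, and
`F_{00} = 0` removes the last term.
-/

section AdaptedFrame

variable {C A : Type*} [Ring C] [AddCommGroup A] [Module C A] {n : ℕ}
  (Γ : Fin (n + 1) → Fin (n + 1) → Fin (n + 1) → C) (II : Fin n → Fin n → C)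

theorem sum_christoffel_spatial_temporal_smul (hΓs00 : ∀ k : Fin n, Γ k.succ 0 0 = 0)
    (hΓs0s : ∀ k a : Fin n, Γ k.succ 0 a.succ = - II k a) (k : Fin n) (X : Fin (n + 1) → A) :
    ∑ σ, Γ k.succ 0 σ • X σ = -∑ l, II k l • X l.succ := by
  simp [Fin.sum_univ_succ, hΓs00, hΓs0s]

theorem sum_christoffel_spatial_spatial_smul (ΓD : Fin n → Fin n → Fin n → C)
    (hΓss0 : ∀ k i : Fin n, Γ k.succ i.succ 0 = - II k i)
    (hΓsss : ∀ k i a : Fin n, Γ k.succ i.succ a.succ = ΓD k i a) (k i : Fin n)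
    (X : Fin (n + 1) → A) :
    ∑ σ, Γ k.succ i.succ σ • X σ = -(II k i • X 0) + ∑ a, ΓD k i a • X a.succ := by
  simp [Fin.sum_univ_succ, hΓss0, hΓsss]

end AdaptedFrame

/-- Decompose the curvature form of a connection `ω` on a Gaussian
foliated spacetime as `F_ω = e⁰ ∧ E_ω + B_ω`, i.e. in components
`E i = F_{0 i}` and `B i j = F_{i j}`.  In an adapted frame (with frame
Christoffel symbols `Γ_{0ν}^λ = 0`, `Γ_{i0}^k = −II_i^k`, `Γ_{ij}^0 = −II_{ij}`
and spatial symbols `ΓD`), the covariant derivative of `F_ω` as a section of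
`Λ²M ⊗ Ad P` decomposes as
`(∇_ω F_ω)_k = e⁰∧e^i ⊗ ((D_ωE_ω)_{ki} + II_k^ℓ B_{ℓi})
 + e^i∧e^j ⊗ ½((D_ωB_ω)_{kij} − II_{kj}E_i + II_{ki}E_j)`,
while the temporal derivative is `∇_ωF_ω/dτ = e⁰∧(∇_ωE_ω/dτ) + ∇_ωB_ω/dτ`. -/
theorem curvature_covariant_derivative_splitting
    {C A : Type*} [CommRing C] [AddCommGroup A] [Module C A]
    (nabAd : Fin 4 → A → A)
    (Fc : Fin 4 → Fin 4 → A)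
    (hFc_antisymm : ∀ μ ν, Fc μ ν = - Fc ν μ)
    (hFc_diag : ∀ μ, Fc μ μ = 0)
    (Γ : Fin 4 → Fin 4 → Fin 4 → C)
    (II : Fin 3 → Fin 3 → C)
    (ΓD : Fin 3 → Fin 3 → Fin 3 → C)
    (hΓ0 : ∀ ν lam : Fin 4, Γ 0 ν lam = 0)
    (hΓs0s : ∀ k a : Fin 3, Γ k.succ 0 a.succ = - II k a)
    (hΓs00 : ∀ k : Fin 3, Γ k.succ 0 0 = 0)
    (hΓss0 : ∀ k i : Fin 3, Γ k.succ i.succ 0 = - II k i)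
    (hΓsss : ∀ k i a : Fin 3, Γ k.succ i.succ a.succ = ΓD k i a)
    (nabF : Fin 4 → Fin 4 → Fin 4 → A)
    (hnabF : ∀ μ ν lam : Fin 4, nabF μ ν lam =
      nabAd μ (Fc ν lam) - (∑ σ : Fin 4, Γ μ ν σ • Fc σ lam)
        - (∑ σ : Fin 4, Γ μ lam σ • Fc ν σ)) :
    (∀ i : Fin 3, nabF 0 0 i.succ = nabAd 0 (Fc 0 i.succ)) ∧
    (∀ i j : Fin 3, nabF 0 i.succ j.succ = nabAd 0 (Fc i.succ j.succ)) ∧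
    (∀ k i : Fin 3, nabF k.succ 0 i.succ =
      (nabAd k.succ (Fc 0 i.succ) - ∑ a : Fin 3, ΓD k i a • Fc 0 a.succ)
        + ∑ l : Fin 3, II k l • Fc l.succ i.succ) ∧
    (∀ k i j : Fin 3, nabF k.succ i.succ j.succ =
      (nabAd k.succ (Fc i.succ j.succ) - (∑ a : Fin 3, ΓD k i a • Fc a.succ j.succ)
        - (∑ a : Fin 3, ΓD k j a • Fc i.succ a.succ))
        - II k j • Fc 0 i.succ + II k i • Fc 0 j.succ) := by
  have temporal : ∀ ν lam, nabF 0 ν lam = nabAd 0 (Fc ν lam) := fun ν lam => by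
    simp [hnabF, hΓ0]
  have temporal_spatial := sum_christoffel_spatial_temporal_smul (A := A) Γ II hΓs00 hΓs0s
  have spatial_spatial := sum_christoffel_spatial_spatial_smul (A := A) Γ II ΓD hΓss0 hΓsss
  refine ⟨fun i => temporal 0 i.succ, fun i j => temporal i.succ j.succ, fun k i => ?_,
    fun k i j => ?_⟩
  · rw [hnabF, temporal_spatial, spatial_spatial, hFc_diag, smul_zero]
    abel
  · rw [hnabF, spatial_spatial, spatial_spatial, hFc_antisymm i.succ 0, smul_neg]
    abel
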